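/- Let X be a connected mixed graph and R^ω(X) its Hermitian Randić matrix of second kind. If 1 is an eigenvalue of R^ω(X), then the eigenvalue 1 is simple (has multiplicity 1). -/
import Mathlib


open Matrix Finset

/-- A mixed graph on `n` vertices: `U` is the un-oriented edge relation and
`O` is the oriented edge relation. -/
structure MixedGraph (n : ℕ) where
  U : Fin n → Fin n → Bool
  O : Fin n → Fin n → Bool
  U_symm : ∀ i j, U i j = U j i
  U_irrefl : ∀ i, U i i = false
  O_irrefl : ∀ i, O i i = false
  O_asymm : ∀ i j, O i j = true → O j i = false
  UO_disjoint : ∀ i j, U i j = true → O i j = false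

/-- The sixth root of unity `ω = (1 + i√3)/2`. -/
noncomputable def omegaC : ℂ := (1 + Complex.I * (Real.sqrt 3 : ℝ)) / 2

/-- The Hermitian adjacency matrix of second kind. -/
noncomputable def Hw {n : ℕ} (X : MixedGraph n) : Matrix (Fin n) (Fin n) ℂ :=
  fun i j =>
    if X.U i j then 1
    else if X.O i j then omegaC
    else if X.O j i then (starRingEnd ℂ) omegaC
    else 0

/-- Adjacency in the underlying graph. -/
def MixedGraph.Adj {n : ℕ} (X : MixedGraph n) (i j : Fin n) : Bool :=
  X.U i j || X.O i j || X.O j i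

/-- Degree of a vertex in the underlying graph. -/
def deg {n : ℕ} (X : MixedGraph n) (i : Fin n) : ℕ :=
  (Finset.univ.filter (fun j => X.Adj i j = true)).card

/-- The Hermitian Randić matrix of second kind, `R^ω(X) = D^{-1/2} H^ω(X) D^{-1/2}`. -/
noncomputable def Rw {n : ℕ} (X : MixedGraph n) : Matrix (Fin n) (Fin n) ℂ :=
  fun i j => ((1 / Real.sqrt ((deg X i : ℝ) * (deg X j : ℝ)) : ℝ) : ℂ) * Hw X i j

lemma omega_conj_mul : (starRingEnd ℂ) omegaC * omegaC = 1 := by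
  unfold omegaC
  have h3 : (Real.sqrt 3 : ℂ) * Real.sqrt 3 = 3 := by
    exact_mod_cast congrArg Complex.ofReal (Real.mul_self_sqrt (by norm_num : (3:ℝ) ≥ 0).le)
  simp only [map_div₀, map_add, _root_.map_one, _root_.map_mul, Complex.conj_I,
    Complex.conj_ofReal, map_ofNat]
  field_simp
  ring_nf
  rw [Complex.I_sq]
  ring_nf
  rw [sq, h3]
  ring

variable {n : ℕ} (X : MixedGraph n)

lemma adj_symm (i j : Fin n) : X.Adj i j = X.Adj j i := by
  simp only [MixedGraph.Adj, X.U_symm i j]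
  cases X.O i j <;> cases X.O j i <;> simp

lemma hw_conj (i j : Fin n) : Hw X j i = (starRingEnd ℂ) (Hw X i j) := by
  unfold Hw
  rw [X.U_symm j i]
  by_cases hU : X.U i j
  · simp [hU]
  · by_cases hO : X.O i j
    · simp [hU, hO, X.O_asymm i j hO]
    · by_cases hO' : X.O j i
      · simp [hU, hO, hO']
      · simp [hU, hO, hO']

lemma hw_zero (i j : Fin n) (h : X.Adj i j = false) : Hw X i j = 0 := by
  simp only [MixedGraph.Adj, Bool.or_eq_false_iff] at h
  simp [Hw, h.1.1, h.1.2, h.2]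

lemma hw_mul (i j : Fin n) :
    (starRingEnd ℂ) (Hw X i j) * Hw X i j = if X.Adj i j = true then 1 else 0 := by
  by_cases h : X.Adj i j = true
  · simp only [h, if_true]
    unfold Hw
    by_cases hU : X.U i j
    · simp [hU]
    · by_cases hO : X.O i j
      · simp only [hU, hO, if_true, if_false]
        exact omega_conj_mul
      · by_cases hO' : X.O j i
        · simp only [hU, hO, hO', Bool.false_eq_true, if_false, if_true, Complex.conj_conj]
          rw [mul_comm]
          exact omega_conj_mul
        · exfalso
          simp [MixedGraph.Adj, hU, hO, hO'] at h
  · simp only [h, if_false]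
    rw [hw_zero X i j (by simpa using h)]
    simp

lemma hw_ne (i j : Fin n) (h : X.Adj i j = true) : Hw X i j ≠ 0 := by
  intro h0
  have := hw_mul X i j
  rw [h0, h] at this
  simp at this

lemma no_adj_all_eq (i : Fin n)
    (hconn : ∀ a b : Fin n, Relation.ReflTransGen (fun a b => X.Adj a b = true) a b)
    (h : ∀ j, ¬ X.Adj i j = true) : ∀ j : Fin n, j = i := by
  intro j
  rcases (hconn i j).cases_head with h1 | ⟨c, hc, _⟩
  · exact h1.symm
  · exact absurd hc (h c)

lemma deg_pos (hconn : ∀ a b : Fin n, Relation.ReflTransGen (fun a b => X.Adj a b = true) a b)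
    (v : Fin n → ℂ) (hv0 : v ≠ 0) (hv : (Rw X).mulVec v = v) (i : Fin n) : 0 < deg X i := by
  rcases Nat.eq_zero_or_pos (deg X i) with h0 | h
  · exfalso
    have hnadj : ∀ j, ¬ X.Adj i j = true := by
      intro j hj
      have : j ∈ Finset.univ.filter (fun j => X.Adj i j = true) := by simp [hj]
      rw [Finset.card_eq_zero.mp h0] at this
      simp at this
    have hall := no_adj_all_eq X i hconn hnadj
    have hvi : v i = 0 := by
      rw [← congrFun hv i]
      simp only [Matrix.mulVec, dotProduct]
      apply Finset.sum_eq_zero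
      intro j _
      rw [hall j]
      have : Hw X i i = 0 := by simp [Hw, X.U_irrefl, X.O_irrefl]
      simp [Rw, this]
    exact hv0 (funext fun j => by rw [hall j]; exact hvi)
  · exact h

lemma edge_rel (hd : ∀ i, 0 < deg X i) (x : Fin n → ℂ) (hx : (Rw X).mulVec x = x)
    (i₀ j₀ : Fin n) (hij : X.Adj i₀ j₀ = true) :
    (((Real.sqrt ((deg X i₀ : ℝ)))⁻¹ : ℝ) : ℂ) * x i₀ =
      Hw X i₀ j₀ * ((((Real.sqrt ((deg X j₀ : ℝ)))⁻¹ : ℝ) : ℂ) * x j₀) := by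
  set y : Fin n → ℂ := fun i => (((Real.sqrt ((deg X i : ℝ)))⁻¹ : ℝ) : ℂ) * x i with hy
  have hs : ∀ i, (0:ℝ) < Real.sqrt (deg X i) :=
    fun i => Real.sqrt_pos.mpr (by exact_mod_cast hd i)
  have hss : ∀ i, Real.sqrt ((deg X i : ℝ)) * Real.sqrt ((deg X i : ℝ)) = (deg X i : ℝ) :=
    fun i => Real.mul_self_sqrt (by positivity)
  have hRw : ∀ i j, Rw X i j =
      (((Real.sqrt ((deg X i : ℝ)))⁻¹ : ℝ) : ℂ) * (((Real.sqrt ((deg X j : ℝ)))⁻¹ : ℝ) : ℂ)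
        * Hw X i j := by
    intro i j
    unfold Rw
    rw [Real.sqrt_mul (by positivity)]
    rw [one_div, mul_inv]
    push_cast
    ring
  set N : ℂ := ∑ i, (starRingEnd ℂ) (x i) * x i with hN
  have hA1 : ∑ i, ∑ j, (if X.Adj i j = true then (starRingEnd ℂ) (y i) * y i else 0) = N := by
    apply Finset.sum_congr rfl
    intro i _
    rw [← Finset.sum_filter, Finset.sum_const]
    show (deg X i) • ((starRingEnd ℂ) (y i) * y i) = _
    simp only [hy, _root_.map_mul, Complex.conj_ofReal, nsmul_eq_mul]
    have h1 : ((deg X i : ℂ)) * ((((Real.sqrt ((deg X i : ℝ)))⁻¹ : ℝ) : ℂ) *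
        (((Real.sqrt ((deg X i : ℝ)))⁻¹ : ℝ) : ℂ)) = 1 := by
      rw [← Complex.ofReal_mul, ← mul_inv, hss i, ← Complex.ofReal_natCast,
        ← Complex.ofReal_mul, mul_inv_cancel₀ (by exact_mod_cast (hd i).ne')]
      simp
    calc (deg X i : ℂ) * ((((Real.sqrt ((deg X i : ℝ)))⁻¹ : ℝ) : ℂ) * (starRingEnd ℂ) (x i) *
          ((((Real.sqrt ((deg X i : ℝ)))⁻¹ : ℝ) : ℂ) * x i))
        = ((deg X i : ℂ)) * ((((Real.sqrt ((deg X i : ℝ)))⁻¹ : ℝ) : ℂ) *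
            (((Real.sqrt ((deg X i : ℝ)))⁻¹ : ℝ) : ℂ)) * ((starRingEnd ℂ) (x i) * x i) := by ring
      _ = (starRingEnd ℂ) (x i) * x i := by rw [h1, one_mul]
  have hA2 : ∑ i, ∑ j, (if X.Adj i j = true then (starRingEnd ℂ) (y i) * (Hw X i j * y j) else 0)
      = N := by
    have step : ∀ i j, (if X.Adj i j = true then (starRingEnd ℂ) (y i) * (Hw X i j * y j) else 0)
        = (starRingEnd ℂ) (x i) * (Rw X i j * x j) := by
      intro i j
      by_cases h : X.Adj i j = true
      · rw [if_pos h, hRw i j]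
        simp only [hy, _root_.map_mul, Complex.conj_ofReal]
        ring
      · rw [if_neg h, hRw i j, hw_zero X i j (by simpa using h)]
        ring
    simp only [step]
    apply Finset.sum_congr rfl
    intro i _
    rw [← Finset.mul_sum]
    have : ∑ j, Rw X i j * x j = x i := by
      rw [← congrFun hx i]
      simp [Matrix.mulVec, dotProduct]
    rw [this]
  have hA3 : ∑ i, ∑ j,
      (if X.Adj i j = true then (starRingEnd ℂ) (Hw X i j * y j) * y i else 0) = N := by
    rw [Finset.sum_comm]
    rw [← hA2]
    apply Finset.sum_congr rfl
    intro j _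
    apply Finset.sum_congr rfl
    intro i _
    rw [adj_symm X j i]
    by_cases h : X.Adj i j = true
    · rw [if_pos h, if_pos h, _root_.map_mul, ← hw_conj X i j]
      ring
    · rw [if_neg h, if_neg h]
  have hA4 : ∑ i, ∑ j,
      (if X.Adj i j = true then (starRingEnd ℂ) (Hw X i j * y j) * (Hw X i j * y j) else 0)
      = N := by
    have step : ∀ i j, (if X.Adj i j = true then
        (starRingEnd ℂ) (Hw X i j * y j) * (Hw X i j * y j) else 0)
        = (if X.Adj i j = true then (starRingEnd ℂ) (y j) * y j else 0) := by
      intro i j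
      by_cases h : X.Adj i j = true
      · rw [if_pos h, if_pos h, _root_.map_mul]
        have := hw_mul X i j
        rw [h, if_pos rfl] at this
        calc (starRingEnd ℂ) (Hw X i j) * (starRingEnd ℂ) (y j) * (Hw X i j * y j)
            = ((starRingEnd ℂ) (Hw X i j) * Hw X i j) * ((starRingEnd ℂ) (y j) * y j) := by ring
          _ = (starRingEnd ℂ) (y j) * y j := by rw [this, one_mul]
      · rw [if_neg h, if_neg h]
    simp only [step]
    rw [Finset.sum_comm, ← hA1]
    apply Finset.sum_congr rfl
    intro j _
    apply Finset.sum_congr rfl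
    intro i _
    rw [adj_symm X j i]
  have hSc : ∑ i, ∑ j,
      (if X.Adj i j = true then ((Complex.normSq (y i - Hw X i j * y j) : ℝ) : ℂ) else 0)
      = 0 := by
    have expand : ∀ i j, (if X.Adj i j = true then
        ((Complex.normSq (y i - Hw X i j * y j) : ℝ) : ℂ) else 0)
        = (if X.Adj i j = true then (starRingEnd ℂ) (y i) * y i else 0)
          - (if X.Adj i j = true then (starRingEnd ℂ) (y i) * (Hw X i j * y j) else 0)
          - (if X.Adj i j = true then (starRingEnd ℂ) (Hw X i j * y j) * y i else 0)
          + (if X.Adj i j = true then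
              (starRingEnd ℂ) (Hw X i j * y j) * (Hw X i j * y j) else 0) := by
      intro i j
      by_cases h : X.Adj i j = true
      · simp only [if_pos h]
        rw [Complex.normSq_eq_conj_mul_self, map_sub]
        ring
      · simp only [if_neg h]
        ring
    simp only [expand, Finset.sum_add_distrib, Finset.sum_sub_distrib]
    rw [hA1, hA2, hA3, hA4]
    ring
  have hSr : ∀ i j, X.Adj i j = true → Complex.normSq (y i - Hw X i j * y j) = 0 := by
    have hnn : ∀ (i j : Fin n), (0:ℝ) ≤
        (if X.Adj i j = true then Complex.normSq (y i - Hw X i j * y j) else 0) := by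
      intro i j
      split_ifs
      · exact Complex.normSq_nonneg _
      · exact le_refl 0
    have h0 : ∑ i, ∑ j,
        (if X.Adj i j = true then Complex.normSq (y i - Hw X i j * y j) else 0) = 0 := by
      have hcast : ((∑ i, ∑ j,
          (if X.Adj i j = true then Complex.normSq (y i - Hw X i j * y j) else 0) : ℝ) : ℂ)
          = ∑ i, ∑ j, (if X.Adj i j = true
              then ((Complex.normSq (y i - Hw X i j * y j) : ℝ) : ℂ) else 0) := by
        push_cast [apply_ite (fun r : ℝ => (r : ℂ))]
        norm_num
      exact_mod_cast hcast.trans hSc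
    intro i j hij'
    have hin := (Finset.sum_eq_zero_iff_of_nonneg (fun i _ => Finset.sum_nonneg
      (fun j _ => hnn i j))).mp h0 i (Finset.mem_univ i)
    have := (Finset.sum_eq_zero_iff_of_nonneg (fun j _ => hnn i j)).mp hin j
      (Finset.mem_univ j)
    rw [if_pos hij'] at this
    exact this
  have := hSr i₀ j₀ hij
  have h0 := Complex.normSq_eq_zero.mp this
  have : y i₀ = Hw X i₀ j₀ * y j₀ := by linear_combination h0
  simpa [hy] using this

lemma zero_prop (hd : ∀ i, 0 < deg X i) (x : Fin n → ℂ) (hx : (Rw X).mulVec x = x)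
    (i j : Fin n) (hij : X.Adj i j = true) (h0 : x j = 0) : x i = 0 := by
  have h := edge_rel X hd x hx i j hij
  rw [h0, mul_zero, mul_zero] at h
  have hs : ((Real.sqrt ((deg X i : ℝ)))⁻¹ : ℝ) ≠ 0 :=
    inv_ne_zero (Real.sqrt_pos.mpr (by exact_mod_cast hd i)).ne'
  exact (mul_eq_zero.mp h).resolve_left (Complex.ofReal_ne_zero.mpr hs)

lemma eigvec_zero (hconn : ∀ a b : Fin n, Relation.ReflTransGen (fun a b => X.Adj a b = true) a b)
    (hd : ∀ i, 0 < deg X i) (x : Fin n → ℂ) (hx : (Rw X).mulVec x = x)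
    (i₀ : Fin n) (h0 : x i₀ = 0) : x = 0 := by
  have key : ∀ j, x j = 0 := by
    intro j
    have hpath := hconn i₀ j
    induction hpath with
    | refl => exact h0
    | tail _ hbc ih =>
      exact zero_prop X hd x hx _ _ (by rw [adj_symm]; exact hbc) ih
  exact funext key

theorem stmt6' {n : ℕ} (X : MixedGraph n)
    (hconn : ∀ i j : Fin n, Relation.ReflTransGen (fun a b => X.Adj a b = true) i j)
    (heig : ∃ v : Fin n → ℂ, v ≠ 0 ∧ (Rw X).mulVec v = v) :
    Module.finrank ℂ (Module.End.eigenspace (Matrix.toLin' (Rw X)) 1) = 1 := by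
  obtain ⟨v, hv0, hv⟩ := heig
  have hd : ∀ i, 0 < deg X i := deg_pos X hconn v hv0 hv
  have hex : ∃ i, v i ≠ 0 := by
    by_contra h
    push_neg at h
    exact hv0 (funext fun i => h i)
  obtain ⟨i₀, hi₀⟩ := hex
  set E := Module.End.eigenspace (Matrix.toLin' (Rw X)) 1 with hE
  have hmem : ∀ x : Fin n → ℂ, x ∈ E ↔ (Rw X).mulVec x = x := by
    intro x
    rw [hE, Module.End.mem_eigenspace_iff, one_smul, Matrix.toLin'_apply]
  let φ : E →ₗ[ℂ] ℂ := (LinearMap.proj i₀).comp E.subtype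
  have hinj : Function.Injective φ := by
    rw [← LinearMap.ker_eq_bot, Submodule.eq_bot_iff]
    intro z hz
    have hz0 : (z : Fin n → ℂ) i₀ = 0 := hz
    have := eigvec_zero X hconn hd (z : Fin n → ℂ) ((hmem _).mp z.2) i₀ hz0
    exact Subtype.ext this
  have hsurj : Function.Surjective φ := by
    intro c
    have hvE : v ∈ E := (hmem v).mpr hv
    refine ⟨⟨(c / v i₀) • v, E.smul_mem _ hvE⟩, ?_⟩
    show ((c / v i₀) • v) i₀ = c
    simp only [Pi.smul_apply, smul_eq_mul]
    exact div_mul_cancel₀ c hi₀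
  have e : E ≃ₗ[ℂ] ℂ := LinearEquiv.ofBijective φ ⟨hinj, hsurj⟩
  rw [e.finrank_eq, Module.finrank_self]


theorem stmt6 {n : ℕ} (X : MixedGraph n)
    (hconn : ∀ i j : Fin n, Relation.ReflTransGen (fun a b => X.Adj a b = true) i j)
    (heig : ∃ v : Fin n → ℂ, v ≠ 0 ∧ (Rw X).mulVec v = v) :
    Module.finrank ℂ (Module.End.eigenspace (Matrix.toLin' (Rw X)) 1) = 1 := by
  exact stmt6' X hconn heig
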